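/- Relativized prime process property: Let Γ = (C, A, Δ) be a normed BPA system and R ⊆ C_G. Suppose X and Y are ≃_R-primes and α, β are processes with αX ≃_R βY. Then X ≃_R Y. -/

import Mathlib

open Relation

/-- A BPA system over constants `C` and actions `A`: a distinguished silent
action `tau`, and a finite set of transition rules `X —ℓ→ α`, where `C` and
`A` are finite. -/
structure BPA (C A : Type) where
  tau : A
  rules : Set (C × A × List C)
  finC : Finite C
  finA : Finite A
  finRules : rules.Finite

namespace BPA

variable {C A : Type}

/-- One-step labelled transition between processes.  Processes are strings
over `C` (lists, with the leftmost constant acting first). -/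
def Step (Γ : BPA C A) (ℓ : A) (p q : List C) : Prop :=
  ∃ X γ β, (X, ℓ, γ) ∈ Γ.rules ∧ p = X :: β ∧ q = γ ++ β

/-- A transition carrying an arbitrary label. -/
def AnyStep (Γ : BPA C A) (p q : List C) : Prop := ∃ ℓ, Γ.Step ℓ p q

/-- `⟹` : the reflexive transitive closure of silent steps. -/
def TauStar (Γ : BPA C A) : List C → List C → Prop := ReflTransGen (Γ.Step Γ.tau)

/-- A process is normed if it can reach the empty process `ε`. -/
def NormedProc (Γ : BPA C A) (p : List C) : Prop := ReflTransGen Γ.AnyStep p []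

/-- The BPA system is normed. -/
def Normed (Γ : BPA C A) : Prop := ∀ X : C, Γ.NormedProc [X]

/-- A chain of `s`-steps starting at `start` in which every visited state is
related by `r` to the process `anchor`. -/
def RelChain (s : List C → List C → Prop) (r : List C → List C → Prop)
    (anchor : List C) : List C → List C → Prop :=
  ReflTransGen fun x y => s x y ∧ r anchor y

/-- Branching bisimulation (an equivalence relation by convention). -/
def IsBranchingBisim (Γ : BPA C A) (r : List C → List C → Prop) : Prop :=
  Equivalence r ∧ ∀ α β, r α β →
    ((∀ a, a ≠ Γ.tau → ∀ α', Γ.Step a α α' →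
        ∃ β'' β', RelChain (Γ.Step Γ.tau) r β β β'' ∧ Γ.Step a β'' β' ∧ r α' β') ∧
     (∀ α', Γ.Step Γ.tau α α' → ¬ r α α' →
        ∃ β'' β', RelChain (Γ.Step Γ.tau) r β β β'' ∧ Γ.Step Γ.tau β'' β' ∧
          ¬ r β'' β' ∧ r α' β'))

/-- Branching bisimilarity `≃` : the largest branching bisimulation. -/
def Bisim (Γ : BPA C A) (α β : List C) : Prop :=
  ∃ r, Γ.IsBranchingBisim r ∧ r α β

/-- A ground process: it can silently reach `ε`. -/
def Ground (Γ : BPA C A) (p : List C) : Prop := Γ.TauStar p []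

/-- The set `C_G` of ground constants. -/
def GroundC (Γ : BPA C A) : Set C := {X | Γ.Ground [X]}

/-- `R`-equality `=_R`: the two processes differ only in suffixes over `R`. -/
def REq (R : Set C) (α β : List C) : Prop :=
  ∃ ζ a b, α = ζ ++ a ∧ β = ζ ++ b ∧ (∀ X ∈ a, X ∈ R) ∧ (∀ X ∈ b, X ∈ R)

open Classical in
/-- The `R`-normal form `α_R` of a process: delete the maximal suffix over `R`. -/
noncomputable def nf (R : Set C) (α : List C) : List C :=
  (α.reverse.dropWhile fun X => decide (X ∈ R)).reverse

/-- A process is in `R`-normal form. -/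
def InNF (R : Set C) (α : List C) : Prop := nf R α = α

/-- The `R`-transition relation `—ℓ→_R` between `R`-normal forms. -/
def StepR (Γ : BPA C A) (R : Set C) (ℓ : A) (ζ η : List C) : Prop :=
  ∃ α β, ζ = nf R α ∧ η = nf R β ∧ Γ.Step ℓ α β

/-- `⟹_R`. -/
def TauStarR (Γ : BPA C A) (R : Set C) : List C → List C → Prop :=
  ReflTransGen (Γ.StepR R Γ.tau)

/-- `R`-bisimulation: an equivalence relation containing `=_R` satisfying
ground preservation and the relativized branching transfer conditions. -/
def IsRBisim (Γ : BPA C A) (R : Set C) (r : List C → List C → Prop) : Prop :=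
  Equivalence r ∧ (∀ α β, REq R α β → r α β) ∧
  ∀ α β, r α β →
    ((Γ.TauStar α [] → Γ.TauStar β []) ∧
     (∀ α', Γ.Step Γ.tau α α' → ¬ r α α' →
        ∃ β'' β', RelChain (Γ.StepR R Γ.tau) r β (nf R β) β'' ∧
          Γ.StepR R Γ.tau β'' β' ∧ ¬ r β'' β' ∧ r α' β') ∧
     (∀ a, a ≠ Γ.tau → ∀ α', Γ.Step a α α' →
        ∃ β'' β', RelChain (Γ.StepR R Γ.tau) r β (nf R β) β'' ∧
          Γ.StepR R a β'' β' ∧ r α' β'))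

/-- `R`-bisimilarity `≃_R` : the largest `R`-bisimulation. -/
def RBisim (Γ : BPA C A) (R : Set C) (α β : List C) : Prop :=
  ∃ r, Γ.IsRBisim R r ∧ r α β

/-- `Id_R = {X ∈ C : X ≃_R ε}`. -/
def IdR (Γ : BPA C A) (R : Set C) : Set C := {X | Γ.RBisim R [X] []}

/-- `Rd_R(γ) = {X ∈ C : Xγ ≃_R γ}`. -/
def RdR (Γ : BPA C A) (R : Set C) (γ : List C) : Set C :=
  {X | Γ.RBisim R (X :: γ) γ}

/-- An admissible reference set: `R = Id_R`. -/
def Admissible (Γ : BPA C A) (R : Set C) : Prop := R = Γ.IdR R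

end BPA

namespace BPA

variable {C A : Type}

/-- `X` is a `≃_R`-identity. -/
def RIdentityC (Γ : BPA C A) (R : Set C) (X : C) : Prop := Γ.RBisim R [X] []

/-- `X` is a `≃_R`-composite: `X ≃_R αX'` for some constant `X' ∉ Id_R` and
some process `α ∉ (Rd_R(X'))*`. -/
def RCompositeC (Γ : BPA C A) (R : Set C) (X : C) : Prop :=
  ∃ (X' : C) (α : List C), X' ∉ Γ.IdR R ∧
    ¬ (∀ Y ∈ α, Y ∈ Γ.RdR R [X']) ∧ Γ.RBisim R [X] (α ++ [X'])

/-- `X` is a `≃_R`-prime: neither a `≃_R`-identity nor a `≃_R`-composite. -/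
def RPrimeC (Γ : BPA C A) (R : Set C) (X : C) : Prop :=
  ¬ Γ.RIdentityC R X ∧ ¬ Γ.RCompositeC R X

end BPA

/-!
Close the `≃_R`-pairs under prefixing a family of seed pairs `x ≃_R y` (in `R`-normal form,
nonempty). The result is again an `R`-bisimulation: a move of `σx` with `σ ≠ []` is made inside
`σ` and copied by `σy`, a move of `x` itself is answered through `x ≃_R y`, and answers are
relayed link by link along chains. Without seeds this is transitivity of `≃_R`; with one seed
it is the congruence `σx ≃_R σy`.

Given `αX ≃_R βY`, play the normed prefix `α` down to `ε`. The answers of `βY` keep the form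
`γY` unless they reach `Y` itself, so `X ≃_R γY` or `δX ≃_R Y`. As `X` is not composite,
every constant of `γ` lies in `Rd_R(Y)`, and the congruence absorbs them one by one:
`γY ≃_R Y`.
-/

namespace BPA

variable {C A : Type}

section NormalForm

variable {R : Set C}

theorem exists_eq_nf_append (R : Set C) (a : List C) :
    ∃ s, a = nf R a ++ s ∧ ∀ Z ∈ s, Z ∈ R := by
  classical
  refine ⟨(a.reverse.takeWhile fun X => decide (X ∈ R)).reverse, ?_, fun Z hZ => ?_⟩
  · rw [nf, ← List.reverse_append, List.takeWhile_append_dropWhile, List.reverse_reverse]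
  · simpa using List.mem_takeWhile_imp (List.mem_reverse.mp hZ)

theorem nf_append_of_forall_mem {s : List C} (hs : ∀ Z ∈ s, Z ∈ R) (a : List C) :
    nf R (a ++ s) = nf R a := by
  classical
  have hdrop : s.reverse.dropWhile (fun X => decide (X ∈ R)) = [] :=
    List.dropWhile_eq_nil_iff.mpr fun Z hZ => by simpa using hs Z (List.mem_reverse.mp hZ)
  simp only [nf, List.reverse_append, List.dropWhile_append, hdrop, List.isEmpty_nil,
    if_true]

theorem nf_append_of_nf_ne_nil {b : List C} (hb : nf R b ≠ []) (a : List C) :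
    nf R (a ++ b) = a ++ nf R b := by
  classical
  have hdrop : b.reverse.dropWhile (fun X => decide (X ∈ R)) ≠ [] := fun h =>
    hb (by simp [nf, h])
  simp [nf, List.reverse_append, List.dropWhile_append, hdrop]

theorem nf_append_eq_self {x : List C} (hx : nf R x = x) (hx₀ : x ≠ []) (σ : List C) :
    nf R (σ ++ x) = σ ++ x := by
  rw [nf_append_of_nf_ne_nil (by rwa [hx]), hx]

theorem nf_nf (R : Set C) (a : List C) : nf R (nf R a) = nf R a := by
  obtain ⟨s, ha, hs⟩ := exists_eq_nf_append R a
  conv_rhs => rw [ha, nf_append_of_forall_mem hs]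

theorem nf_singleton {Y : C} (hY : Y ∉ R) : nf R [Y] = [Y] := by
  classical
  simp [nf, hY]

theorem REq_iff_nf_eq {a b : List C} : REq R a b ↔ nf R a = nf R b := by
  constructor
  · rintro ⟨ζ, s, t, rfl, rfl, hs, ht⟩
    rw [nf_append_of_forall_mem hs, nf_append_of_forall_mem ht]
  · intro h
    obtain ⟨s, ha, hs⟩ := exists_eq_nf_append R a
    obtain ⟨t, hb, ht⟩ := exists_eq_nf_append R b
    exact ⟨nf R a, s, t, ha, h ▸ hb, hs, ht⟩

theorem REq_nf (R : Set C) (a : List C) : REq R a (nf R a) :=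
  REq_iff_nf_eq.mpr (nf_nf R a).symm

end NormalForm

section Steps

variable {Γ : BPA C A} {R : Set C} {ℓ : A}

theorem Step.append {p q : List C} (h : Γ.Step ℓ p q) (w : List C) :
    Γ.Step ℓ (p ++ w) (q ++ w) := by
  obtain ⟨X, γ, β, hr, rfl, rfl⟩ := h
  exact ⟨X, γ, β ++ w, hr, rfl, by simp⟩

theorem Step.exists_of_append {u w q : List C} (hu : u ≠ []) (h : Γ.Step ℓ (u ++ w) q) :
    ∃ u', Γ.Step ℓ u u' ∧ q = u' ++ w := by
  obtain ⟨X, γ, β, hr, hp, rfl⟩ := h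
  obtain _ | ⟨Z, u₁⟩ := u
  · exact absurd rfl hu
  · obtain ⟨rfl, rfl⟩ := List.cons_eq_cons.mp hp
    exact ⟨γ ++ u₁, ⟨Z, γ, u₁, hr, rfl, rfl⟩, by simp⟩

theorem Normed.normedProc (hΓ : Γ.Normed) (a : List C) : Γ.NormedProc a := by
  induction a with
  | nil => exact .refl
  | cons Z t ih =>
    have hZ : ReflTransGen Γ.AnyStep ([Z] ++ t) ([] ++ t) :=
      (hΓ Z).lift (· ++ t) fun _ _ ⟨ℓ, h⟩ => ⟨ℓ, h.append t⟩
    exact hZ.trans ih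

theorem TauStar.append {p q : List C} (h : Γ.TauStar p q) (w : List C) :
    Γ.TauStar (p ++ w) (q ++ w) :=
  h.lift (· ++ w) fun _ _ h => h.append w

theorem TauStar.append_nil {u w : List C} (hu : Γ.TauStar u []) (hw : Γ.TauStar w []) :
    Γ.TauStar (u ++ w) [] :=
  (hu.append w).trans hw

theorem TauStar.of_append_nil {u w : List C} (h : Γ.TauStar (u ++ w) []) :
    Γ.TauStar u [] ∧ Γ.TauStar w [] := by
  generalize hc : u ++ w = c at h
  induction h using ReflTransGen.head_induction_on generalizing u with
  | refl =>
    obtain ⟨rfl, rfl⟩ := List.append_eq_nil_iff.mp hc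
    exact ⟨.refl, .refl⟩
  | head hstep hrest ih =>
    subst hc
    by_cases hu : u = []
    · subst hu
      exact ⟨.refl, .head hstep hrest⟩
    · obtain ⟨u', hu', rfl⟩ := Step.exists_of_append hu hstep
      obtain ⟨h₁, h₂⟩ := ih rfl
      exact ⟨.head hu' h₁, h₂⟩

theorem tauStar_nil_of_forall_mem (hR : R ⊆ Γ.GroundC) {s : List C} (hs : ∀ Z ∈ s, Z ∈ R) :
    Γ.TauStar s [] := by
  induction s with
  | nil => exact .refl
  | cons Z t ih =>
    exact TauStar.append_nil (u := [Z]) (hR (hs Z (by simp)))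
      (ih fun W hW => hs W (by simp [hW]))

theorem TauStar.nil_of_REq (hR : R ⊆ Γ.GroundC) {a b : List C} (h : REq R a b)
    (ha : Γ.TauStar a []) : Γ.TauStar b [] := by
  obtain ⟨ζ, s, t, rfl, rfl, -, ht⟩ := h
  exact (TauStar.of_append_nil ha).1.append_nil (tauStar_nil_of_forall_mem hR ht)

theorem Step.stepR {p q : List C} (h : Γ.Step ℓ p q) : Γ.StepR R ℓ (nf R p) (nf R q) :=
  ⟨p, q, rfl, rfl, h⟩

theorem StepR.nf_right {ζ η : List C} (h : Γ.StepR R ℓ ζ η) : nf R η = η := by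
  obtain ⟨p, q, -, rfl, -⟩ := h
  exact nf_nf R q

theorem Step.stepR_append {σ σ' x : List C} (h : Γ.Step ℓ σ σ') (hx : nf R x = x)
    (hx₀ : x ≠ []) : Γ.StepR R ℓ (σ ++ x) (σ' ++ x) := by
  simpa only [nf_append_eq_self hx hx₀] using (h.append x).stepR (R := R)

theorem StepR.exists_of_append {σ x η : List C} (hx : nf R x = x) (hx₀ : x ≠ [])
    (hσ : σ ≠ []) (h : Γ.StepR R ℓ (σ ++ x) η) :
    ∃ σ', Γ.Step ℓ σ σ' ∧ η = σ' ++ x := by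
  obtain ⟨p, q, hp, rfl, hpq⟩ := h
  obtain ⟨s, hps, hs⟩ := exists_eq_nf_append R p
  rw [← hp, List.append_assoc] at hps
  subst hps
  obtain ⟨σ', hσ', rfl⟩ := Step.exists_of_append hσ hpq
  refine ⟨σ', hσ', ?_⟩
  rw [← List.append_assoc, nf_append_of_forall_mem hs, nf_append_eq_self hx hx₀]

end Steps

section RBisimulation

variable {Γ : BPA C A} {R : Set C} {r : List C → List C → Prop}

theorem REq_equivalence (R : Set C) : Equivalence (REq R) where
  refl _ := REq_iff_nf_eq.mpr rfl
  symm h := REq_iff_nf_eq.mpr (REq_iff_nf_eq.mp h).symm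
  trans h₁ h₂ := REq_iff_nf_eq.mpr ((REq_iff_nf_eq.mp h₁).trans (REq_iff_nf_eq.mp h₂))

/-- Since `ζ —ℓ→_R η` only asks for *some* representatives of `ζ` and `η`, an `R`-equal
process answers every move `a —ℓ→ a'` in one `R`-step, to `nf R a'`. -/
theorem isRBisim_REq (hR : R ⊆ Γ.GroundC) : Γ.IsRBisim R (REq R) := by
  have hstep {a b a' : List C} {ℓ : A} (hab : REq R a b) (h : Γ.Step ℓ a a') :
      Γ.StepR R ℓ (nf R b) (nf R a') :=
    REq_iff_nf_eq.mp hab ▸ h.stepR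
  refine ⟨REq_equivalence R, fun _ _ => id,
    fun a b hab => ⟨TauStar.nil_of_REq hR hab, ?_, ?_⟩⟩
  · refine fun a' h hne => ⟨nf R b, nf R a', .refl, hstep hab h, fun h' => hne ?_, REq_nf R a'⟩
    rw [REq_iff_nf_eq, nf_nf, nf_nf] at h'
    exact REq_iff_nf_eq.mpr ((REq_iff_nf_eq.mp hab).trans h')
  · exact fun ℓ _ a' h => ⟨nf R b, nf R a', .refl, hstep hab h, REq_nf R a'⟩

theorem IsRBisim.exists_stepR (hr : Γ.IsRBisim R r) {a b a' : List C} {ℓ : A} (h : r a b)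
    (hs : Γ.Step ℓ a a') (hℓ : ¬(ℓ = Γ.tau ∧ r a a')) :
    ∃ b'' b', RelChain (Γ.StepR R Γ.tau) r b (nf R b) b'' ∧
      Γ.StepR R ℓ b'' b' ∧ r a' b' := by
  by_cases hτ : ℓ = Γ.tau
  · subst hτ
    obtain ⟨b'', b', hc, hs', -, h'⟩ := (hr.2.2 a b h).2.1 a' hs fun h' => hℓ ⟨rfl, h'⟩
    exact ⟨b'', b', hc, hs', h'⟩
  · exact (hr.2.2 a b h).2.2 ℓ hτ a' hs

theorem IsRBisim.rel_nf (hr : Γ.IsRBisim R r) {a b : List C} (h : r a b) : r (nf R a) (nf R b) :=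
  hr.1.trans (hr.1.symm (hr.2.1 _ _ (REq_nf R a))) (hr.1.trans h (hr.2.1 _ _ (REq_nf R b)))

theorem RBisim.of_REq (hR : R ⊆ Γ.GroundC) {a b : List C} (h : REq R a b) : Γ.RBisim R a b :=
  ⟨REq R, isRBisim_REq hR, h⟩

theorem RBisim.refl (hR : R ⊆ Γ.GroundC) (a : List C) : Γ.RBisim R a a :=
  .of_REq hR ((REq_equivalence R).refl a)

theorem RBisim.tauStar_nil {a b : List C} (h : Γ.RBisim R a b) (ha : Γ.TauStar a []) :
    Γ.TauStar b [] :=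
  let ⟨_, hr, hab⟩ := h
  (hr.2.2 a b hab).1 ha

theorem RBisim.symm {a b : List C} (h : Γ.RBisim R a b) : Γ.RBisim R b a :=
  let ⟨r, hr, hab⟩ := h
  ⟨r, hr, hr.1.symm hab⟩

end RBisimulation

section RelChain

variable {s r r' : List C → List C → Prop} {a a' x y : List C}

theorem RelChain.mono (h : RelChain s r a x y) (hr : ∀ z, r a z → r' a' z) :
    RelChain s r' a' x y :=
  ReflTransGen.mono (fun _ _ h => ⟨h.1, hr _ h.2⟩) _ _ h

theorem RelChain.rel_right (h : RelChain s r a x y) (hx : r a x) : r a y := by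
  rcases h.cases_tail with rfl | ⟨_, -, h⟩
  exacts [hx, h.2]

theorem RelChain.nf_right {Γ : BPA C A} {R : Set C} {ℓ : A}
    (h : RelChain (Γ.StepR R ℓ) r a x y) (hx : nf R x = x) : nf R y = y := by
  rcases h.cases_tail with rfl | ⟨_, -, h⟩
  exacts [hx, h.1.nf_right]

end RelChain

section Answers

variable {Γ : BPA C A} {R : Set C} {ℓ : A}

/-- The answer the transfer clauses of `IsRBisim` ask for, into `T`, with its `τ`-path kept
inside the `S`-class of `u`. -/
def Answers (Γ : BPA C A) (R : Set C) (S : List C → List C → Prop) (u : List C)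
    (T : List C → Prop) (ℓ : A) (ξ : List C) : Prop :=
  ∃ ξ'', RelChain (Γ.StepR R Γ.tau) S u ξ ξ'' ∧
    ((ℓ = Γ.tau ∧ T ξ'') ∨ ∃ ξ', Γ.StepR R ℓ ξ'' ξ' ∧ T ξ')

theorem Answers.mono {S S' : List C → List C → Prop} {u u' : List C}
    {T T' : List C → Prop} {ξ : List C} (h : Γ.Answers R S u T ℓ ξ)
    (hS : ∀ z, S u z → S' u' z) (hT : ∀ z, T z → T' z) :
    Γ.Answers R S' u' T' ℓ ξ := by
  obtain ⟨ξ'', hc, ⟨hτ, h⟩ | ⟨ξ', hs, h⟩⟩ := h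
  exacts [⟨ξ'', hc.mono hS, .inl ⟨hτ, hT _ h⟩⟩,
    ⟨ξ'', hc.mono hS, .inr ⟨ξ', hs, hT _ h⟩⟩]

theorem IsRBisim.answers {r : List C → List C → Prop} (hr : Γ.IsRBisim R r)
    {ζ ξ ζ' : List C} (h : r ζ ξ) (hξ : nf R ξ = ξ) (hs : Γ.StepR R ℓ ζ ζ') :
    Γ.Answers R r ξ (r ζ') ℓ ξ := by
  obtain ⟨p, q, rfl, rfl, hpq⟩ := hs
  have hp : r p ξ := hr.1.trans (hr.2.1 _ _ (REq_nf R p)) h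
  have hq : r (nf R q) q := hr.1.symm (hr.2.1 _ _ (REq_nf R q))
  by_cases hℓ : ℓ = Γ.tau ∧ r p q
  · exact ⟨ξ, .refl, .inl ⟨hℓ.1, hr.1.trans hq (hr.1.trans (hr.1.symm hℓ.2) hp)⟩⟩
  · obtain ⟨ξ'', ξ', hc, hs', h'⟩ := hr.exists_stepR hp hpq hℓ
    rw [hξ] at hc
    exact ⟨ξ'', hc, .inr ⟨ξ', hs', hr.1.trans hq h'⟩⟩

end Answers

section PrefixClosure

variable {Γ : BPA C A} {R : Set C} {P : List C → List C → Prop}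

structure IsPrefixSeed (Γ : BPA C A) (R : Set C) (P : List C → List C → Prop) : Prop where
  symm {x y : List C} : P x y → P y x
  nf_eq {x y : List C} : P x y → nf R x = x
  ne_nil {x y : List C} : P x y → x ≠ []
  rbisim {x y : List C} : P x y → Γ.RBisim R x y

def PrefixLink (Γ : BPA C A) (R : Set C) (P : List C → List C → Prop) (a b : List C) : Prop :=
  (∃ σ x y, P x y ∧ a = σ ++ x ∧ b = σ ++ y) ∨ Γ.RBisim R a b

def prefixClosure (Γ : BPA C A) (R : Set C) (P : List C → List C → Prop) :
    List C → List C → Prop :=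
  ReflTransGen (Γ.PrefixLink R P)

theorem PrefixLink.symm (hP : IsPrefixSeed Γ R P) {a b : List C} (h : Γ.PrefixLink R P a b) :
    Γ.PrefixLink R P b a := by
  rcases h with ⟨σ, x, y, hxy, rfl, rfl⟩ | h
  exacts [.inl ⟨σ, y, x, hP.symm hxy, rfl, rfl⟩, .inr h.symm]

theorem PrefixLink.to_nf (hP : IsPrefixSeed Γ R P) {a b : List C} (h : Γ.PrefixLink R P a b) :
    Γ.PrefixLink R P (nf R a) (nf R b) := by
  rcases h with ⟨σ, x, y, hxy, rfl, rfl⟩ | ⟨r, hr, h⟩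
  · have hyx := hP.symm hxy
    exact .inl ⟨σ, x, y, hxy, nf_append_eq_self (hP.nf_eq hxy) (hP.ne_nil hxy) σ,
      nf_append_eq_self (hP.nf_eq hyx) (hP.ne_nil hyx) σ⟩
  · exact .inr ⟨r, hr, hr.rel_nf h⟩

theorem PrefixLink.tauStar_nil (hP : IsPrefixSeed Γ R P) {a b : List C}
    (h : Γ.PrefixLink R P a b) (ha : Γ.TauStar a []) : Γ.TauStar b [] := by
  rcases h with ⟨σ, x, y, hxy, rfl, rfl⟩ | h
  · obtain ⟨hσ, hx⟩ := TauStar.of_append_nil ha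
    exact hσ.append_nil ((hP.rbisim hxy).tauStar_nil hx)
  · exact h.tauStar_nil ha

theorem prefixClosure_of_rbisim {a b : List C} (h : Γ.RBisim R a b) :
    Γ.prefixClosure R P a b :=
  .single (.inr h)

theorem prefixClosure_equivalence (hP : IsPrefixSeed Γ R P) :
    Equivalence (Γ.prefixClosure R P) where
  refl _ := .refl
  symm h := by
    induction h with
    | refl => exact .refl
    | tail _ hl ih => exact .head (hl.symm hP) ih
  trans := ReflTransGen.trans

theorem prefixClosure.tauStar_nil (hP : IsPrefixSeed Γ R P) {a b : List C}
    (h : Γ.prefixClosure R P a b) (ha : Γ.TauStar a []) : Γ.TauStar b [] := by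
  induction h with
  | refl => exact ha
  | tail _ hl ih => exact hl.tauStar_nil hP ih

theorem PrefixLink.answers (hP : IsPrefixSeed Γ R P) {ζ ξ ζ' : List C} {ℓ : A}
    (h : Γ.PrefixLink R P ζ ξ) (hξ : nf R ξ = ξ) (hs : Γ.StepR R ℓ ζ ζ') :
    Γ.Answers R (Γ.prefixClosure R P) ξ (Γ.PrefixLink R P ζ') ℓ ξ := by
  have of_rbisim (h : Γ.RBisim R ζ ξ) :
      Γ.Answers R (Γ.prefixClosure R P) ξ (Γ.PrefixLink R P ζ') ℓ ξ := by
    obtain ⟨r, hr, h⟩ := h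
    exact (IsRBisim.answers hr h hξ hs).mono (fun z hz => prefixClosure_of_rbisim ⟨r, hr, hz⟩)
      fun z hz => .inr ⟨r, hr, hz⟩
  rcases h with ⟨σ, x, y, hxy, rfl, rfl⟩ | h
  · rcases eq_or_ne σ [] with rfl | hσ
    · exact of_rbisim (by simpa using hP.rbisim hxy)
    · obtain ⟨σ', hσ', rfl⟩ := hs.exists_of_append (hP.nf_eq hxy) (hP.ne_nil hxy) hσ
      have hyx := hP.symm hxy
      exact ⟨σ ++ y, .refl, .inr ⟨σ' ++ y,
        hσ'.stepR_append (hP.nf_eq hyx) (hP.ne_nil hyx), .inl ⟨σ', x, y, hxy, rfl, rfl⟩⟩⟩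
  · exact of_rbisim h

theorem RelChain.prefixLink_relay (hP : IsPrefixSeed Γ R P) {u ζ ζ₁ ξ : List C}
    (hc : RelChain (Γ.StepR R Γ.tau) (Γ.prefixClosure R P) u ζ ζ₁)
    (h : Γ.PrefixLink R P ζ ξ) (hξ : nf R ξ = ξ) (hu : Γ.prefixClosure R P u ξ) :
    ∃ ξ₁, RelChain (Γ.StepR R Γ.tau) (Γ.prefixClosure R P) u ξ ξ₁ ∧
      Γ.PrefixLink R P ζ₁ ξ₁ ∧ nf R ξ₁ = ξ₁ := by
  induction hc using ReflTransGen.head_induction_on generalizing ξ with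
  | refl => exact ⟨ξ, .refl, h, hξ⟩
  | head hs _ ih =>
    obtain ⟨ξ'', hc'', hfin⟩ := h.answers hP hξ hs.1
    have hcu : RelChain _ _ u ξ ξ'' := hc''.mono fun z hz => hu.trans hz
    rcases hfin with ⟨-, hl⟩ | ⟨ξ', hs', hl⟩
    · obtain ⟨ξ₁, hc₁, hl₁, hnf₁⟩ := ih hl (hc''.nf_right hξ) (hcu.rel_right hu)
      exact ⟨ξ₁, hcu.trans hc₁, hl₁, hnf₁⟩
    · have hu' : Γ.prefixClosure R P u ξ' := hs.2.tail hl
      obtain ⟨ξ₁, hc₁, hl₁, hnf₁⟩ := ih hl hs'.nf_right hu'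
      exact ⟨ξ₁, (hcu.tail ⟨hs', hu'⟩).trans hc₁, hl₁, hnf₁⟩

theorem Answers.of_prefixLink (hP : IsPrefixSeed Γ R P) {u u' ξ η : List C} {ℓ : A}
    (ha : Γ.Answers R (Γ.prefixClosure R P) u (Γ.prefixClosure R P u') ℓ ξ)
    (h : Γ.PrefixLink R P ξ η) (hη : nf R η = η) (hu : Γ.prefixClosure R P u η) :
    Γ.Answers R (Γ.prefixClosure R P) u (Γ.prefixClosure R P u') ℓ η := by
  obtain ⟨ξ'', hc, hfin⟩ := ha
  obtain ⟨η₁, hc₁, hl₁, hnf₁⟩ := hc.prefixLink_relay hP h hη hu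
  rcases hfin with ⟨hτ, h'⟩ | ⟨ξ', hs, h'⟩
  · exact ⟨η₁, hc₁, .inl ⟨hτ, h'.tail hl₁⟩⟩
  · obtain ⟨η'', hc₂, hfin₂⟩ := (hl₁.answers hP hnf₁ hs).mono
      (fun z hz => (hc₁.rel_right hu).trans hz) fun z hz => h'.tail hz
    exact ⟨η'', hc₁.trans hc₂, hfin₂⟩

theorem Answers.of_prefixClosure (hR : R ⊆ Γ.GroundC) (hP : IsPrefixSeed Γ R P)
    {u u' v : List C} {ℓ : A}
    (ha : Γ.Answers R (Γ.prefixClosure R P) u (Γ.prefixClosure R P u') ℓ (nf R u))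
    (h : Γ.prefixClosure R P u v) :
    Γ.Answers R (Γ.prefixClosure R P) u (Γ.prefixClosure R P u') ℓ (nf R v) := by
  induction h with
  | refl => exact ha
  | tail hw hl ih =>
    exact ih.of_prefixLink hP (hl.to_nf hP) (nf_nf R _)
      ((hw.tail hl).trans (prefixClosure_of_rbisim (.of_REq hR (REq_nf R _))))

theorem isRBisim_prefixClosure (hR : R ⊆ Γ.GroundC) (hP : IsPrefixSeed Γ R P) :
    Γ.IsRBisim R (Γ.prefixClosure R P) := by
  have hS := prefixClosure_equivalence hP
  have hnf (a : List C) : Γ.prefixClosure R P a (nf R a) :=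
    prefixClosure_of_rbisim (.of_REq hR (REq_nf R a))
  refine ⟨hS, fun a b h => prefixClosure_of_rbisim (.of_REq hR h), fun u v huv => ?_⟩
  have answer {ℓ : A} {u' : List C} (hs : Γ.Step ℓ u u') :
      ∃ ξ'', RelChain (Γ.StepR R Γ.tau) (Γ.prefixClosure R P) v (nf R v) ξ'' ∧
        Γ.prefixClosure R P u ξ'' ∧ ((ℓ = Γ.tau ∧ Γ.prefixClosure R P u' ξ'') ∨
          ∃ ξ', Γ.StepR R ℓ ξ'' ξ' ∧ Γ.prefixClosure R P u' ξ') := by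
    obtain ⟨ξ'', hc, hfin⟩ := Answers.of_prefixClosure hR hP
      ⟨nf R u, .refl, .inr ⟨nf R u', hs.stepR, hnf u'⟩⟩ huv
    exact ⟨ξ'', hc.mono fun z hz => hS.trans (hS.symm huv) hz,
      hc.rel_right (hS.trans huv (hnf v)), hfin⟩
  refine ⟨huv.tauStar_nil hP, fun u' hs hne => ?_, fun ℓ hℓ u' hs => ?_⟩
  · obtain ⟨ξ'', hc, hu, ⟨-, h'⟩ | ⟨ξ', hs', h'⟩⟩ := answer hs
    · exact absurd (hS.trans hu (hS.symm h')) hne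
    · exact ⟨ξ'', ξ', hc, hs', fun h'' => hne (hS.trans hu (hS.trans h'' (hS.symm h'))), h'⟩
  · obtain ⟨ξ'', hc, -, ⟨hτ, -⟩ | ⟨ξ', hs', h'⟩⟩ := answer hs
    · exact absurd hτ hℓ
    · exact ⟨ξ'', ξ', hc, hs', h'⟩

theorem RBisim.trans (hR : R ⊆ Γ.GroundC) {a b c : List C}
    (h₁ : Γ.RBisim R a b) (h₂ : Γ.RBisim R b c) : Γ.RBisim R a c :=
  ⟨Γ.prefixClosure R fun _ _ => False,
    isRBisim_prefixClosure hR ⟨id, False.elim, False.elim, False.elim⟩,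
    (prefixClosure_of_rbisim h₁).trans (prefixClosure_of_rbisim h₂)⟩

theorem RBisim.append_left (hR : R ⊆ Γ.GroundC) {x y : List C}
    (hx : nf R x = x) (hx₀ : x ≠ []) (hy : nf R y = y) (hy₀ : y ≠ [])
    (h : Γ.RBisim R x y) (σ : List C) : Γ.RBisim R (σ ++ x) (σ ++ y) := by
  let P a b := a = x ∧ b = y ∨ a = y ∧ b = x
  have hP : IsPrefixSeed Γ R P := by
    refine ⟨?_, ?_, ?_, ?_⟩ <;> rintro _ _ (⟨rfl, rfl⟩ | ⟨rfl, rfl⟩)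
    exacts [.inr ⟨rfl, rfl⟩, .inl ⟨rfl, rfl⟩, hx, hy, hx₀, hy₀, h, h.symm]
  exact ⟨_, isRBisim_prefixClosure hR hP,
    .single (.inl ⟨σ, x, y, .inl ⟨rfl, rfl⟩, rfl, rfl⟩)⟩

end PrefixClosure

section Decomposition

variable {Γ : BPA C A} {R : Set C} {r : List C → List C → Prop} {X Y : C}

theorem RelChain.rel_singleton_or_eq_append (hY : Y ∉ R) {anc γ d : List C}
    (h : RelChain (Γ.StepR R Γ.tau) r anc (γ ++ [Y]) d) (hγ : r anc (γ ++ [Y])) :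
    r anc [Y] ∨ ∃ γ', γ' ≠ [] ∧ d = γ' ++ [Y] := by
  generalize hc : γ ++ [Y] = c at h hγ
  induction h using ReflTransGen.head_induction_on generalizing γ with
  | refl =>
    subst hc
    rcases eq_or_ne γ [] with rfl | hγ₀
    exacts [.inl hγ, .inr ⟨γ, hγ₀, rfl⟩]
  | head hs _ ih =>
    subst hc
    rcases eq_or_ne γ [] with rfl | hγ₀
    · exact .inl hγ
    · obtain ⟨γ', -, rfl⟩ :=
        hs.1.exists_of_append (nf_singleton hY) (List.cons_ne_nil _ _) hγ₀
      exact ih rfl hs.2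

theorem IsRBisim.rel_singleton_append_or_rel_append_singleton (hr : Γ.IsRBisim R r)
    (hY : Y ∉ R) {a γ : List C} (ha : Γ.NormedProc a) (h : r (a ++ [X]) (γ ++ [Y])) :
    (∃ γ', r [X] (γ' ++ [Y])) ∨ ∃ δ, r (δ ++ [X]) [Y] := by
  have hY₀ : [Y] ≠ [] := List.cons_ne_nil _ _
  unfold NormedProc at ha
  induction ha using ReflTransGen.head_induction_on generalizing γ with
  | refl => exact .inl ⟨γ, by simpa using h⟩
  | @head a a₁ hs _ ih =>
    obtain ⟨ℓ, hs⟩ := hs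
    by_cases hℓ : ℓ = Γ.tau ∧ r (a ++ [X]) (a₁ ++ [X])
    · exact ih (hr.1.trans (hr.1.symm hℓ.2) h)
    · obtain ⟨β'', β', hc, hs', h'⟩ := hr.exists_stepR h (hs.append [X]) hℓ
      rw [nf_append_eq_self (nf_singleton hY) hY₀] at hc
      rcases hc.rel_singleton_or_eq_append hY (hr.1.refl _) with hYr | ⟨γ'', hγ'', rfl⟩
      · exact .inr ⟨a, hr.1.trans h hYr⟩
      · obtain ⟨γ₃, -, rfl⟩ := hs'.exists_of_append (nf_singleton hY) hY₀ hγ''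
        exact ih h'

end Decomposition

section Primes

variable {Γ : BPA C A} {R : Set C} {X Y : C}

theorem notMem_of_notMem_IdR (hR : R ⊆ Γ.GroundC) (hX : X ∉ Γ.IdR R) : X ∉ R :=
  fun hXR => hX (.of_REq hR ⟨[], [X], [], rfl, rfl, by simpa using hXR, by simp⟩)

theorem rbisim_append_singleton_of_forall_mem_RdR (hR : R ⊆ Γ.GroundC) (hY : Y ∉ R)
    {γ : List C} (hγ : ∀ Z ∈ γ, Z ∈ Γ.RdR R [Y]) : Γ.RBisim R (γ ++ [Y]) [Y] := by
  induction γ with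
  | nil => exact .refl hR _
  | cons Z t ih =>
    have hY₀ : [Y] ≠ [] := List.cons_ne_nil _ _
    have ht := ih fun W hW => hγ W (List.mem_cons_of_mem Z hW)
    exact (ht.append_left hR (nf_append_eq_self (nf_singleton hY) hY₀ t) (by simp)
      (nf_singleton hY) hY₀ [Z]).trans hR (hγ Z List.mem_cons_self)

theorem rbisim_singleton_of_not_RCompositeC (hR : R ⊆ Γ.GroundC) (hX : ¬Γ.RCompositeC R X)
    (hY : Y ∉ Γ.IdR R) {γ : List C} (h : Γ.RBisim R [X] (γ ++ [Y])) :
    Γ.RBisim R [X] [Y] := by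
  have hγ : ∀ Z ∈ γ, Z ∈ Γ.RdR R [Y] := by
    by_contra hγ
    exact hX ⟨Y, γ, hY, hγ, h⟩
  exact h.trans hR
    (rbisim_append_singleton_of_forall_mem_RdR hR (notMem_of_notMem_IdR hR hY) hγ)

end Primes

end BPA

/-- **Relativized prime process property.**  If `X`, `Y` are `≃_R`-primes and
`αX ≃_R βY`, then `X ≃_R Y`. -/
theorem R_prime_property {C A : Type} (Γ : BPA C A) (hΓ : Γ.Normed)
    (R : Set C) (hR : R ⊆ Γ.GroundC) (X Y : C)
    (hX : Γ.RPrimeC R X) (hY : Γ.RPrimeC R Y) (α β : List C)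
    (h : Γ.RBisim R (α ++ [X]) (β ++ [Y])) : Γ.RBisim R [X] [Y] := by
  obtain ⟨r, hr, h⟩ := h
  rcases BPA.IsRBisim.rel_singleton_append_or_rel_append_singleton hr
    (BPA.notMem_of_notMem_IdR hR hY.1) (hΓ.normedProc α) h with ⟨γ, hγ⟩ | ⟨δ, hδ⟩
  · exact BPA.rbisim_singleton_of_not_RCompositeC hR hX.2 hY.1 ⟨r, hr, hγ⟩
  · exact (BPA.rbisim_singleton_of_not_RCompositeC hR hY.2 hX.1
      (BPA.RBisim.symm ⟨r, hr, hδ⟩)).symm
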